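/- Suppose S is a safe zone (S ⊆ I for every I with Sol I), U is an unsafe zone (U ∩ I = ∅ for every I with Sol I), and the hypothesis without unsafe zones S ∪ L is a solution interpretation (Sol (S ∪ L) holds). Then the full Chronosymbolic hypothesis S ∪ (L \ U) is also a solution interpretation, i.e., Sol (S ∪ (L \ U)) holds. (This is the claim Ĩ_slu ⪰ Ĩ_sl of Lemma 1.) -/

import Mathlib

theorem stmt2_general {α : Type*} (Sol : Set α → Prop) (S U L : Set α)
    (hU : ∀ I : Set α, Sol I → U ∩ I = ∅)
    (hSL : Sol (S ∪ L)) :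
    Sol (S ∪ (L \ U)) := by
  have hLU : Disjoint L U :=
    (Set.disjoint_iff_inter_eq_empty.mpr (hU _ hSL)).symm.mono_left Set.subset_union_right
  rwa [hLU.sdiff_eq_left]

theorem stmt2 {α : Type*} (Sol : Set α → Prop) (S U L : Set α)
    (hS : ∀ I : Set α, Sol I → S ⊆ I)
    (hU : ∀ I : Set α, Sol I → U ∩ I = ∅)
    (hSL : Sol (S ∪ L)) :
    Sol (S ∪ (L \ U)) :=
  stmt2_general Sol S U L hU hSL
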